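/- arXiv:2003.07777 — 2 statements merged into one kernel-verified Lean document; each statement's English description precedes it below -/
import Mathlib

section
/- For every t > 0, the row sums of the matrix exponential are bounded uniformly in the row index: for every i ∈ ℤ, Σ_{j ∈ ℤ} (e^{tA})_{ij} ≤ C₃(t), where C₃(t) = 1 + C₁ t e^{αβt²} + C₂ (e^{αβt²} − 1) + (C₂ + C₁ t²)(4αβt² + 2) e^{αβt²}. In particular, for every bounded function φ : ℤ → ℝ the function i ↦ Σ_{j ∈ ℤ} (e^{tA})_{ij} φ(j) is well defined and bounded. -/
/-- The dispersal matrix `A = (a_{ij})_{i,j ∈ ℤ}`: `a_{ij} = β` if `j = i ± 1` and `i` even,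
`a_{ij} = α` if `j = i ± 1` and `i` odd, and `a_{ij} = 0` otherwise. -/
noncomputable def matA (α β : ℝ) (i j : ℤ) : ℝ :=
  if j = i + 1 ∨ j = i - 1 then (if Even i then β else α) else 0

/-- Entrywise matrix powers: `(A⁰)_{ij} = δ_{ij}` and `(A^{n+1})_{ij} = Σ_{k ∈ ℤ} (Aⁿ)_{ik} a_{kj}`. -/
noncomputable def matApow (α β : ℝ) : ℕ → ℤ → ℤ → ℝ
  | 0 => fun i j => if i = j then 1 else 0
  | n + 1 => fun i j => ∑' k : ℤ, matApow α β n i k * matA α β k j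

/-- The matrix exponential, entrywise: . -/
noncomputable def matExp (α β t : ℝ) (i j : ℤ) : ℝ :=
  ∑' n : ℕ, t ^ n * matApow α β n i j / (n.factorial : ℝ)

/-!
Row `i` of `Aⁿ` is supported on the columns of the parity of `i + n`, and from all those
columns `A` steps to a neighbour with the same weight `rowWeight α β (i + n)`. Hence the row sums
of `A^(2m)` and `A^(2m+1)` are `(4αβ)^m` and `2 c_i (4αβ)^m`, where `c_i = rowWeight α β i`.
Summing the exponential series (Tonelli: every term is nonnegative) gives, with `ω = √(αβ)`, the
exact row sum `cosh (2ωt) + (c_i / ω) sinh (2ωt)` of `e^{tA}`. It is at most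
`e · e^{ω²t²} + 2 c_i t e^{ω²t²}` because `2ωt ≤ ω²t² + 1` and `sinh y ≤ y e^{y²/4}`
(termwise, from `4^m m! ≤ (2m+1)!`), and this is dominated by `C₃(t)`.
-/

open Real

def rowWeight (α β : ℝ) (k : ℤ) : ℝ := if Even k then β else α

section Powers

variable {α β : ℝ}

theorem rowWeight_nonneg (hα : 0 ≤ α) (hβ : 0 ≤ β) (k : ℤ) : 0 ≤ rowWeight α β k := by
  unfold rowWeight; split <;> assumption

theorem rowWeight_le_max (k : ℤ) : rowWeight α β k ≤ max α β := by
  unfold rowWeight; split <;> simp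

theorem rowWeight_eq_of_even_sub {k l : ℤ} (h : Even (k - l)) :
    rowWeight α β k = rowWeight α β l := by
  have : Even k ↔ Even l := by rw [Int.even_iff] at h; rw [Int.even_iff, Int.even_iff]; omega
  simp only [rowWeight, if_congr this rfl rfl]

theorem rowWeight_mul_rowWeight_add_one (k : ℤ) :
    rowWeight α β k * rowWeight α β (k + 1) = α * β := by
  rcases Int.even_or_odd k with h | h <;>
    simp [rowWeight, h, Int.not_even_iff_odd.2, mul_comm]

theorem matApow_succ_apply (n : ℕ) (i j : ℤ) :
    matApow α β (n + 1) i j = matApow α β n i (j - 1) * rowWeight α β (j - 1)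
      + matApow α β n i (j + 1) * rowWeight α β (j + 1) := by
  show ∑' k, matApow α β n i k * matA α β k j = _
  rw [tsum_eq_sum (s := {j - 1, j + 1}), Finset.sum_pair (by omega)]
  · simp [matA, rowWeight]
  · intro k hk
    simp only [Finset.mem_insert, Finset.mem_singleton, not_or] at hk
    simp [matA, show ¬(j = k + 1 ∨ j = k - 1) by omega]

theorem matApow_nonneg (hα : 0 ≤ α) (hβ : 0 ≤ β) (n : ℕ) (i j : ℤ) :
    0 ≤ matApow α β n i j := by
  induction n generalizing j with
  | zero => simp only [matApow]; split <;> norm_num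
  | succ n ih =>
    rw [matApow_succ_apply]
    have := rowWeight_nonneg hα hβ
    exact add_nonneg (mul_nonneg (ih _) (this _)) (mul_nonneg (ih _) (this _))

theorem matApow_eq_zero_of_odd {n : ℕ} {i j : ℤ} (h : Odd (i + j + n)) :
    matApow α β n i j = 0 := by
  induction n generalizing j with
  | zero =>
    have : i ≠ j := by rintro rfl; simp [Int.odd_iff] at h; omega
    simp [matApow, this]
  | succ n ih =>
    rw [Int.odd_iff] at h
    push_cast at h
    rw [matApow_succ_apply, ih (by rw [Int.odd_iff]; omega), ih (by rw [Int.odd_iff]; omega)]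
    ring

theorem matApow_mul_rowWeight (n : ℕ) (i k : ℤ) :
    matApow α β n i k * rowWeight α β k = matApow α β n i k * rowWeight α β (i + n) := by
  rcases Int.even_or_odd (i + k + n) with h | h
  · rw [rowWeight_eq_of_even_sub (k := k) (l := i + n) (by rw [Int.even_iff] at h ⊢; omega)]
  · simp [matApow_eq_zero_of_odd h]

theorem HasSum.matApow_succ {n : ℕ} {i : ℤ} {s : ℝ} (h : HasSum (matApow α β n i) s) :
    HasSum (matApow α β (n + 1) i) (2 * rowWeight α β (i + n) * s) := by
  have hshift (d : ℤ) : HasSum (fun j => matApow α β n i (j + d) * rowWeight α β (i + n))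
      (s * rowWeight α β (i + n)) :=
    (Equiv.addRight d).hasSum_iff (f := fun j => matApow α β n i j * rowWeight α β (i + n)) |>.2
      (h.mul_right _)
  have hrow : matApow α β (n + 1) i = fun j => matApow α β n i (j + -1) * rowWeight α β (i + n)
      + matApow α β n i (j + 1) * rowWeight α β (i + n) := by
    refine funext fun j => ?_
    rw [matApow_succ_apply, matApow_mul_rowWeight, matApow_mul_rowWeight, sub_eq_add_neg]
  rw [hrow, show 2 * rowWeight α β (i + n) * s
    = s * rowWeight α β (i + n) + s * rowWeight α β (i + n) by ring]
  exact (hshift (-1)).add (hshift 1)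

theorem hasSum_matApow_two_mul (m : ℕ) (i : ℤ) :
    HasSum (matApow α β (2 * m) i) ((4 * α * β) ^ m) ∧
      HasSum (matApow α β (2 * m + 1) i) ((4 * α * β) ^ m * (2 * rowWeight α β i)) := by
  have hodd {m : ℕ} (h : HasSum (matApow α β (2 * m) i) ((4 * α * β) ^ m)) :
      HasSum (matApow α β (2 * m + 1) i) ((4 * α * β) ^ m * (2 * rowWeight α β i)) := by
    convert h.matApow_succ using 1
    rw [rowWeight_eq_of_even_sub (k := i + (2 * m : ℕ)) (l := i) (by simp)]
    ring
  induction m with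
  | zero =>
    have h0 : HasSum (matApow α β 0 i) 1 := by
      convert hasSum_ite_eq i (1 : ℝ) using 2 with j
      simp [matApow, eq_comm]
    exact ⟨by simpa using h0, hodd (by simpa using h0)⟩
  | succ m ih =>
    have heven : HasSum (matApow α β (2 * (m + 1)) i) ((4 * α * β) ^ (m + 1)) := by
      rw [show 2 * (m + 1) = 2 * m + 1 + 1 by ring]
      convert ih.2.matApow_succ using 1
      rw [rowWeight_eq_of_even_sub (k := i + (2 * m + 1 : ℕ)) (l := i + 1) (by simp)]
      linear_combination
        (-4 * (4 * α * β) ^ m) * rowWeight_mul_rowWeight_add_one (α := α) (β := β) i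
    exact ⟨heven, hodd heven⟩

end Powers

section Series

open scoped Nat

theorem Nat.four_pow_mul_factorial_le_factorial_two_mul_add_one (m : ℕ) :
    4 ^ m * m ! ≤ (2 * m + 1)! := by
  have hchoose : (2 * m).choose m * m ! * m ! = (2 * m)! := by
    simpa [two_mul] using Nat.choose_mul_factorial_mul_factorial (by omega : m ≤ 2 * m)
  calc 4 ^ m * m ! ≤ (2 * m + 1) * (2 * m).choose m * m ! :=
        Nat.mul_le_mul_right _ (four_pow_le_two_mul_add_one_mul_central_binom m)
    _ ≤ (2 * m + 1) * (2 * m).choose m * m ! * m ! := Nat.le_mul_of_pos_right _ m.factorial_pos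
    _ = (2 * m + 1)! := by rw [factorial_succ, ← hchoose]; ring

theorem Real.sinh_le_mul_exp_sq_div_four {y : ℝ} (hy : 0 ≤ y) :
    sinh y ≤ y * exp (y ^ 2 / 4) := by
  have hexp : HasSum (fun m : ℕ => y * ((y ^ 2 / 4) ^ m / m !)) (y * exp (y ^ 2 / 4)) := by
    rw [exp_eq_exp_ℝ]; exact (NormedSpace.expSeries_div_hasSum_exp _).mul_left y
  refine hasSum_le (fun m => ?_) (hasSum_sinh y) hexp
  have hfac : ((4 ^ m * m ! : ℕ) : ℝ) ≤ (2 * m + 1)! := by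
    exact_mod_cast Nat.four_pow_mul_factorial_le_factorial_two_mul_add_one m
  push_cast at hfac
  calc y ^ (2 * m + 1) / (2 * m + 1)! ≤ y ^ (2 * m + 1) / (4 ^ m * m !) :=
        div_le_div_of_nonneg_left (by positivity) (by positivity) hfac
    _ = y * ((y ^ 2 / 4) ^ m / m !) := by rw [pow_succ, pow_mul, div_pow]; field_simp

theorem Real.cosh_le_exp {y : ℝ} (hy : 0 ≤ y) : cosh y ≤ exp y := by
  rw [← cosh_add_sinh]; linarith [sinh_nonneg_iff.2 hy]

theorem cosh_add_div_mul_sinh_le {ω t c : ℝ} (hω : 0 < ω) (ht : 0 ≤ t) (hc : 0 ≤ c) :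
    cosh (2 * ω * t) + c / ω * sinh (2 * ω * t)
      ≤ exp (ω ^ 2 * t ^ 2 + 1) + 2 * c * t * exp (ω ^ 2 * t ^ 2) := by
  have hy : 0 ≤ 2 * ω * t := by positivity
  have hcosh : cosh (2 * ω * t) ≤ exp (ω ^ 2 * t ^ 2 + 1) :=
    (cosh_le_exp hy).trans (exp_le_exp.2 (by nlinarith [sq_nonneg (ω * t - 1)]))
  have hsinh : c / ω * sinh (2 * ω * t) ≤ 2 * c * t * exp (ω ^ 2 * t ^ 2) := by
    calc c / ω * sinh (2 * ω * t) ≤ c / ω * (2 * ω * t * exp ((2 * ω * t) ^ 2 / 4)) :=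
          mul_le_mul_of_nonneg_left (sinh_le_mul_exp_sq_div_four hy) (by positivity)
      _ = 2 * c * t * exp (ω ^ 2 * t ^ 2) := by field_simp; ring_nf
  linarith

end Series

theorem hasSum_tsum_swap_of_nonneg {ι κ : Type*} {f : ι → κ → ℝ} (hf : ∀ n j, 0 ≤ f n j)
    {g : ι → ℝ} (hg : ∀ n, HasSum (f n) (g n)) {a : ℝ} (ha : HasSum g a) :
    HasSum (fun j => ∑' n, f n j) a := by
  have hsum : Summable (Function.uncurry f) :=
    (summable_prod_of_nonneg fun p => hf p.1 p.2).2
      ⟨fun n => (hg n).summable, by simpa only [(hg _).tsum_eq] using ha.summable⟩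
  have hprod : HasSum (Function.uncurry f) a := by
    rw [← (hsum.hasSum.prod_fiberwise hg).unique ha]; exact hsum.hasSum
  exact ((Equiv.prodComm κ ι).hasSum_iff.2 hprod).prod_fiberwise
    fun j => (hsum.prod_symm.prod_factor j).hasSum

section BoundedWeight

variable {ι : Type*} {f φ : ι → ℝ} {M : ℝ}

theorem norm_mul_le_mul_of_abs_le (hf0 : ∀ j, 0 ≤ f j) (hφ : ∀ j, |φ j| ≤ M) (j : ι) :
    ‖f j * φ j‖ ≤ f j * M := by
  rw [norm_mul, Real.norm_of_nonneg (hf0 j), Real.norm_eq_abs]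
  exact mul_le_mul_of_nonneg_left (hφ j) (hf0 j)

theorem Summable.mul_of_abs_le (hf0 : ∀ j, 0 ≤ f j) (hf : Summable f) (hφ : ∀ j, |φ j| ≤ M) :
    Summable (fun j => f j * φ j) :=
  (hf.mul_right M).of_norm_bounded (norm_mul_le_mul_of_abs_le hf0 hφ)

theorem HasSum.abs_tsum_mul_le_of_abs_le {s : ℝ} (hf0 : ∀ j, 0 ≤ f j) (hf : HasSum f s)
    (hφ : ∀ j, |φ j| ≤ M) : |∑' j, f j * φ j| ≤ s * M :=
  tsum_of_norm_bounded (hf.mul_right M) (norm_mul_le_mul_of_abs_le hf0 hφ)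

end BoundedWeight

section Exp

open scoped Nat

variable {α β : ℝ}

theorem summable_matApow (n : ℕ) (i : ℤ) : Summable (matApow α β n i) := by
  obtain ⟨m, rfl | rfl⟩ := Nat.even_or_odd' n
  exacts [(hasSum_matApow_two_mul m i).1.summable, (hasSum_matApow_two_mul m i).2.summable]

theorem matExp_nonneg (hα : 0 ≤ α) (hβ : 0 ≤ β) {t : ℝ} (ht : 0 ≤ t) (i j : ℤ) :
    0 ≤ matExp α β t i j :=
  tsum_nonneg fun n => by have := matApow_nonneg hα hβ n i j; positivity

theorem hasSum_matExp_row (hα : 0 < α) (hβ : 0 < β) {t : ℝ} (ht : 0 ≤ t) (i : ℤ) :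
    HasSum (matExp α β t i)
      (cosh (2 * √(α * β) * t) + rowWeight α β i / √(α * β) * sinh (2 * √(α * β) * t)) := by
  set ω := √(α * β)
  have hω : 0 < ω := sqrt_pos.2 (mul_pos hα hβ)
  have hω2 : 4 * α * β = (2 * ω) ^ 2 := by rw [mul_pow, sq_sqrt (by positivity)]; ring
  set g : ℕ → ℝ := fun n => t ^ n * (∑' j, matApow α β n i j) / (n !)
  refine hasSum_tsum_swap_of_nonneg (g := g)
    (fun n j => by have := matApow_nonneg hα.le hβ.le n i j; positivity)
    (fun n => ((summable_matApow n i).hasSum.mul_left _).div_const _) (.even_add_odd ?_ ?_)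
  · refine (hasSum_cosh (2 * ω * t)).congr_fun fun m => ?_
    simp only [g, (hasSum_matApow_two_mul m i).1.tsum_eq, hω2, ← pow_mul]
    ring
  · refine ((hasSum_sinh (2 * ω * t)).mul_left (rowWeight α β i / ω)).congr_fun fun m => ?_
    simp only [g, (hasSum_matApow_two_mul m i).2.tsum_eq, hω2, ← pow_mul]
    field_simp
    ring

end Exp

theorem one_le_max_sqrt_div {α β : ℝ} (hα : 0 < α) (hβ : 0 < β) :
    1 ≤ max √(β / α) √(α / β) := by
  rcases le_total α β with h | h
  · exact le_max_of_le_left (one_le_sqrt.2 ((one_le_div hα).2 h))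
  · exact le_max_of_le_right (one_le_sqrt.2 ((one_le_div hβ).2 h))

theorem sqrt_mul_le_max {α : ℝ} (hα : 0 ≤ α) (β : ℝ) : √(α * β) ≤ max α β :=
  (sqrt_le_left (le_max_of_le_left hα)).2
    (by nlinarith [le_max_left α β, le_max_right α β])

theorem two_le_mul_rpow_neg_half {α β C : ℝ} (hα : 0 < α) (hβ : 0 < β)
    (hC : 2 * max α β ≤ C) : 2 ≤ C * (α * β) ^ ((-(1 : ℝ)) / 2) := by
  have hαβ : 0 < α * β := mul_pos hα hβ
  rw [neg_div, rpow_neg hαβ.le, ← sqrt_eq_rpow, ← div_eq_mul_inv, le_div_iff₀ (sqrt_pos.2 hαβ)]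
  linarith [sqrt_mul_le_max hα.le β]

theorem exp_add_one_add_mul_exp_le {x t c C₁ C₂ : ℝ} (hx : 0 ≤ x) (ht : 0 ≤ t) (hc : 0 ≤ c)
    (hC₁ : 2 * c ≤ C₁) (hC₂ : 2 ≤ C₂) :
    exp (x + 1) + 2 * c * t * exp x
      ≤ 1 + C₁ * t * exp x + C₂ * (exp x - 1) + (C₂ + C₁ * t ^ 2) * (4 * x + 2) * exp x := by
  have hE : 1 ≤ exp x := one_le_exp hx
  have hsinh_part : 2 * c * t * exp x ≤ C₁ * t * exp x := by gcongr
  have hfactor : 2 * 2 ≤ (C₂ + C₁ * t ^ 2) * (4 * x + 2) := by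
    have : 0 ≤ C₁ * t ^ 2 := mul_nonneg (by linarith) (sq_nonneg t)
    exact mul_le_mul (by linarith) (by linarith) zero_le_two (by linarith)
  have hcosh_part : exp (x + 1) ≤ (C₂ + C₁ * t ^ 2) * (4 * x + 2) * exp x := by
    rw [exp_add]
    nlinarith [exp_one_lt_three]
  nlinarith

/-- With `C₁ = 2 max{√(β/α), √(α/β)} max{α, β}`, `C₂ = C₁ (αβ)^{−1/2}` and
`C₃(t) = 1 + C₁ t e^{αβt²} + C₂(e^{αβt²} − 1) + (C₂ + C₁ t²)(4αβt² + 2) e^{αβt²}`: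
for every `t > 0`, each row of `e^{tA}` is summable with sum at most `C₃(t)` (uniformly in the
row index `i`), and for every bounded `φ : ℤ → ℝ` the function
`i ↦ Σ_{j ∈ ℤ} (e^{tA})_{ij} φ(j)` is well defined and bounded. -/
theorem matExp_row_sum_bound (α β : ℝ) (hα : 0 < α) (hβ : 0 < β)
    (C₁ C₂ : ℝ)
    (hC₁ : C₁ = 2 * max (Real.sqrt (β / α)) (Real.sqrt (α / β)) * max α β)
    (hC₂ : C₂ = C₁ * (α * β) ^ ((-(1 : ℝ)) / 2))
    (C₃ : ℝ → ℝ)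
    (hC₃ : ∀ t : ℝ, C₃ t = 1 + C₁ * t * Real.exp (α * β * t ^ 2)
        + C₂ * (Real.exp (α * β * t ^ 2) - 1)
        + (C₂ + C₁ * t ^ 2) * (4 * α * β * t ^ 2 + 2) * Real.exp (α * β * t ^ 2))
    (t : ℝ) (ht : 0 < t) :
    (∀ i : ℤ, Summable (fun j : ℤ => matExp α β t i j) ∧
        (∑' j : ℤ, matExp α β t i j) ≤ C₃ t) ∧
    ∀ φ : ℤ → ℝ, (∃ M : ℝ, ∀ i : ℤ, |φ i| ≤ M) →
      (∀ i : ℤ, Summable (fun j : ℤ => matExp α β t i j * φ j)) ∧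
      ∃ M : ℝ, ∀ i : ℤ, |∑' j : ℤ, matExp α β t i j * φ j| ≤ M := by
  have hαβ : 0 < α * β := mul_pos hα hβ
  have hC₁_ge : 2 * max α β ≤ C₁ := by
    rw [hC₁]; nlinarith [one_le_max_sqrt_div hα hβ, lt_max_of_lt_left (c := β) hα]
  have hC₂_ge : 2 ≤ C₂ := hC₂ ▸ two_le_mul_rpow_neg_half hα hβ hC₁_ge
  have hrow_le (i : ℤ) : cosh (2 * √(α * β) * t)
      + rowWeight α β i / √(α * β) * sinh (2 * √(α * β) * t) ≤ C₃ t := by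
    have hc := rowWeight_nonneg hα.le hβ.le i
    refine (cosh_add_div_mul_sinh_le (sqrt_pos.2 hαβ) ht.le hc).trans ?_
    rw [sq_sqrt hαβ.le, hC₃, show 4 * α * β * t ^ 2 = 4 * (α * β * t ^ 2) by ring]
    exact exp_add_one_add_mul_exp_le (by positivity) ht.le hc
      (by linarith [rowWeight_le_max (α := α) (β := β) i]) hC₂_ge
  have hrow (i : ℤ) := hasSum_matExp_row hα hβ ht.le i
  refine ⟨fun i => ⟨(hrow i).summable, (hrow i).tsum_eq ▸ hrow_le i⟩, fun φ ⟨M, hM⟩ => ?_⟩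
  have hnonneg := matExp_nonneg hα.le hβ.le ht.le
  refine ⟨fun i => (hrow i).summable.mul_of_abs_le (hnonneg i) hM, C₃ t * M, fun i => ?_⟩
  exact ((hrow i).abs_tsum_mul_le_of_abs_le (hnonneg i) hM).trans
    (mul_le_mul_of_nonneg_right (hrow_le i) ((abs_nonneg _).trans (hM 0)))
end

section
/- Suppose r ≥ 2β + γ. Then for every η > 0 one has r > Γ(η), the spreading speed c*(η) is decreasing in η on (0, ∞), and lim_{η → ∞} c*(η) = 0. -/
/-!
Write `F(A, η, l) = -(l + 2β + γ) + A / (l + 2α + η) + r e^{-lτ}`, so that `λ(μ, η)` is the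
positive zero of `F(A_μ, η, ·)` with `A_μ = αβ(e^μ + e^{-μ})² ≥ 4αβ`; `F` is strictly
decreasing in `l`. For `η < η'` and `l = λ(μ, η')`, passing from `F(A_μ, η', l) = 0` to
`F(A_μ, η, l + δ)` loses at most `δ(1 + rτ)` in the linear and delay terms but gains about
`A_μ(η' - η) / (l + 2α + η')²` in the fraction, so `λ(μ, η) ≥ λ(μ, η') + δ` with `δ > 0`
uniform over bounded ranges of `μ`. Large `μ` are irrelevant for `c*`, because
`λ(μ, η) ≥ √A_μ - O(1)` grows exponentially.
For the limit take `μ = (log η) / 2`: then `A_μ ≤ 4αβη`, so `λ(μ, η) ≤ A_μ / (2α + η) + r`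
stays bounded and `c*(η) = O(1 / log η)`.
-/

open Real Filter Set Topology

/-- `F(λ, μ, η)` of the paper, with the coefficient `αβ(e^μ + e^{−μ})²` replaced by `A`. -/
noncomputable def charFun (α β γ τ r A η l : ℝ) : ℝ :=
  -(l + 2 * β + γ) + A / (l + 2 * α + η) + r * exp (-l * τ)

section charFun

variable {α β γ τ r A η η' l l' : ℝ}

theorem charFun_strictAntiOn (hA : 0 ≤ A) (hr : 0 ≤ r) (hτ : 0 ≤ τ) :
    StrictAntiOn (charFun α β γ τ r A η) (Ioi (-(2 * α + η))) := by
  intro l₁ h₁ l₂ h₂ hl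
  rw [mem_Ioi] at h₁ h₂
  have hfrac : A / (l₂ + 2 * α + η) ≤ A / (l₁ + 2 * α + η) :=
    div_le_div_of_nonneg_left hA (by linarith) (by linarith)
  have hexp : exp (-l₂ * τ) ≤ exp (-l₁ * τ) := exp_le_exp.2 (by nlinarith)
  unfold charFun
  nlinarith [mul_le_mul_of_nonneg_left hexp hr]

theorem le_div_add_of_charFun_eq_zero (hA : 0 ≤ A) (hr : 0 ≤ r) (hτ : 0 ≤ τ)
    (hη : 0 < 2 * α + η) (hl : 0 ≤ l) (h : charFun α β γ τ r A η l = 0) :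
    l + 2 * β + γ ≤ A / (2 * α + η) + r := by
  have hfrac : A / (l + 2 * α + η) ≤ A / (2 * α + η) :=
    div_le_div_of_nonneg_left hA hη (by linarith)
  have hexp : exp (-l * τ) ≤ 1 := exp_le_one_iff.2 (by nlinarith)
  unfold charFun at h
  nlinarith [mul_le_mul_of_nonneg_left hexp hr]

theorem sqrt_le_of_charFun_eq_zero (hr : 0 ≤ r) (hβγ : 0 ≤ 2 * β + γ)
    (hη : 0 < 2 * α + η) (hl : 0 ≤ l) (h : charFun α β γ τ r A η l = 0) :
    √A ≤ l + (2 * β + γ) + (2 * α + η) := by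
  have hD : 0 < l + 2 * α + η := by linarith
  have hfrac : A / (l + 2 * α + η) ≤ l + 2 * β + γ := by
    unfold charFun at h
    nlinarith [mul_nonneg hr (exp_pos (-l * τ)).le]
  rw [div_le_iff₀ hD] at hfrac
  rw [sqrt_le_left (by linarith)]
  nlinarith [mul_le_mul (show l + 2 * β + γ ≤ l + (2 * β + γ) + (2 * α + η) by linarith)
    (show l + 2 * α + η ≤ l + (2 * β + γ) + (2 * α + η) by linarith) hD.le (by linarith)]

theorem exp_neg_mul_sub_exp_neg_mul_le {δ : ℝ} (hl : 0 ≤ l) (hδ : 0 ≤ δ) (hτ : 0 ≤ τ) :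
    exp (-l * τ) - exp (-(l + δ) * τ) ≤ δ * τ := by
  have hsplit : exp (-(l + δ) * τ) = exp (-l * τ) * exp (-(δ * τ)) := by
    rw [← exp_add]; ring_nf
  have h₁ : exp (-l * τ) ≤ 1 := exp_le_one_iff.2 (by nlinarith)
  have h₂ := one_sub_le_exp_neg (δ * τ)
  rw [hsplit]
  nlinarith [exp_pos (-l * τ), mul_nonneg hδ hτ]

theorem charFun_sub_le_charFun_add {δ : ℝ} (hA : 0 ≤ A) (hr : 0 ≤ r) (hτ : 0 ≤ τ)
    (hη : 0 < 2 * α + η) (hl : 0 ≤ l) (hδ : 0 ≤ δ) (hδη : δ ≤ η' - η) :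
    charFun α β γ τ r A η' l - δ * (1 + r * τ) + A * (η' - η - δ) / (l + 2 * α + η') ^ 2 ≤
      charFun α β γ τ r A η (l + δ) := by
  have hD₁ : 0 < l + δ + 2 * α + η := by linarith
  have hD : l + δ + 2 * α + η ≤ l + 2 * α + η' := by linarith
  have hfrac : A * (η' - η - δ) / (l + 2 * α + η') ^ 2 ≤
      A / (l + δ + 2 * α + η) - A / (l + 2 * α + η') := by
    rw [div_sub_div _ _ hD₁.ne' (by linarith), sq]
    have : A * (η' - η - δ) = A * (l + 2 * α + η') - (l + δ + 2 * α + η) * A := by ring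
    rw [this]
    exact div_le_div_of_nonneg_left (by nlinarith) (mul_pos hD₁ (by linarith))
      (mul_le_mul_of_nonneg_right hD (by linarith))
  have hexp := mul_le_mul_of_nonneg_left (exp_neg_mul_sub_exp_neg_mul_le hl hδ hτ) hr
  unfold charFun
  nlinarith

theorem add_le_of_charFun_eq_zero {δ L : ℝ} (hA : 0 ≤ A) (hr : 0 ≤ r) (hτ : 0 ≤ τ)
    (hη : 0 < 2 * α + η) (hl : 0 < l + 2 * α + η) (hl' : 0 ≤ l') (hL : l' ≤ L) (hδ : 0 ≤ δ)
    (hδη : δ ≤ (η' - η) / 2) (hδA : δ * (1 + r * τ) * (L + 2 * α + η') ^ 2 ≤ A * (η' - η) / 2)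
    (h : charFun α β γ τ r A η l = 0) (h' : charFun α β γ τ r A η' l' = 0) : l' + δ ≤ l := by
  have hD : 0 < l' + 2 * α + η' := by linarith
  have hgain : δ * (1 + r * τ) ≤ A * (η' - η - δ) / (l' + 2 * α + η') ^ 2 := by
    rw [le_div_iff₀ (by positivity)]
    have hsq : (l' + 2 * α + η') ^ 2 ≤ (L + 2 * α + η') ^ 2 := by gcongr
    nlinarith [mul_le_mul_of_nonneg_left hsq (mul_nonneg hδ (by nlinarith : 0 ≤ 1 + r * τ))]
  have hshift := charFun_sub_le_charFun_add (β := β) (γ := γ) (η' := η') hA hr hτ hη hl' hδ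
    (by linarith)
  rw [h'] at hshift
  have hanti : StrictAntiOn (charFun α β γ τ r A η) (Ioi (-(2 * α + η))) :=
    charFun_strictAntiOn hA hr hτ
  refine (hanti.le_iff_ge (mem_Ioi.2 (by linarith)) (mem_Ioi.2 (by linarith))).1 ?_
  rw [h]
  linarith

end charFun

theorem exp_add_exp_neg (μ : ℝ) : exp μ + exp (-μ) = 2 * cosh μ := by
  rw [cosh_eq]; ring

theorem four_le_exp_add_exp_neg_sq (μ : ℝ) : 4 ≤ (exp μ + exp (-μ)) ^ 2 := by
  rw [exp_add_exp_neg]; nlinarith [one_le_cosh μ]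

theorem exp_add_exp_neg_sq_le_sq {μ ν : ℝ} (hμ : 0 ≤ μ) (hμν : μ ≤ ν) :
    (exp μ + exp (-μ)) ^ 2 ≤ (exp ν + exp (-ν)) ^ 2 := by
  have : cosh μ ≤ cosh ν := cosh_le_cosh.2 (abs_le_abs_of_nonneg hμ hμν)
  rw [exp_add_exp_neg, exp_add_exp_neg]
  gcongr

theorem exp_add_exp_neg_sq_le {μ : ℝ} (hμ : 0 ≤ μ) : (exp μ + exp (-μ)) ^ 2 ≤ 4 * exp μ ^ 2 := by
  have : exp (-μ) ≤ exp μ := exp_le_exp.2 (by linarith)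
  nlinarith [exp_pos (-μ)]

theorem sqrt_mul_exp_le_sqrt {a : ℝ} (ha : 0 ≤ a) (μ : ℝ) :
    √a * exp μ ≤ √(a * (exp μ + exp (-μ)) ^ 2) := by
  rw [sqrt_mul ha, sqrt_sq (by positivity)]
  gcongr
  linarith [exp_pos (-μ)]

def IsCharRoot (α β γ τ r : ℝ) (lam : ℝ → ℝ → ℝ) : Prop :=
  ∀ η, 0 < η → ∀ μ, 0 ≤ μ →
    0 < lam μ η ∧ charFun α β γ τ r (α * β * (exp μ + exp (-μ)) ^ 2) η (lam μ η) = 0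

noncomputable def spreadingSpeed (lam : ℝ → ℝ → ℝ) (η : ℝ) : ℝ :=
  sInf {c | ∃ μ, 0 < μ ∧ c = lam μ η / μ}

section spreadingSpeed

variable {α β γ τ r η η' : ℝ} {lam : ℝ → ℝ → ℝ}

theorem spreadingSpeed_le {μ : ℝ} (hlam : ∀ μ, 0 < μ → 0 ≤ lam μ η) (hμ : 0 < μ) :
    spreadingSpeed lam η ≤ lam μ η / μ :=
  csInf_le ⟨0, by rintro _ ⟨ν, hν, rfl⟩; exact div_nonneg (hlam ν hν) hν.le⟩ ⟨μ, hμ, rfl⟩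

theorem le_spreadingSpeed {b : ℝ} (h : ∀ μ, 0 < μ → b ≤ lam μ η / μ) :
    b ≤ spreadingSpeed lam η :=
  le_csInf ⟨lam 1 η / 1, 1, one_pos, rfl⟩ (by rintro _ ⟨μ, hμ, rfl⟩; exact h μ hμ)

theorem IsCharRoot.exists_gap (hlam : IsCharRoot α β γ τ r lam) (hα : 0 < α) (hβ : 0 < β)
    (hr : 0 ≤ r) (hτ : 0 ≤ τ) (hη : 0 < η) (hηη' : η < η') {M : ℝ} (hM : 0 ≤ M) :
    ∃ δ > 0, ∀ μ, 0 ≤ μ → μ ≤ M → lam μ η' + δ ≤ lam μ η := by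
  have hη' : 0 < η' := hη.trans hηη'
  set L := α * β * (exp M + exp (-M)) ^ 2 / (2 * α + η') + r - (2 * β + γ)
  have hL : ∀ μ, 0 ≤ μ → μ ≤ M → lam μ η' ≤ L := by
    intro μ hμ hμM
    have := le_div_add_of_charFun_eq_zero (by positivity) hr hτ (by linarith)
      (hlam η' hη' μ hμ).1.le (hlam η' hη' μ hμ).2
    have : α * β * (exp μ + exp (-μ)) ^ 2 ≤ α * β * (exp M + exp (-M)) ^ 2 :=
      mul_le_mul_of_nonneg_left (exp_add_exp_neg_sq_le_sq hμ hμM) (by positivity)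
    have : α * β * (exp μ + exp (-μ)) ^ 2 / (2 * α + η') ≤
        α * β * (exp M + exp (-M)) ^ 2 / (2 * α + η') := by gcongr
    linarith
  have hLpos : 0 < L + 2 * α + η' := by linarith [hL M hM le_rfl, (hlam η' hη' M hM).1]
  have hrτ : 0 < 1 + r * τ := by nlinarith
  refine ⟨min ((η' - η) / 2) (4 * α * β * (η' - η) / 2 / ((1 + r * τ) * (L + 2 * α + η') ^ 2)),
    lt_min (by linarith) (by have := mul_pos hα hβ; positivity), fun μ hμ hμM => ?_⟩
  refine add_le_of_charFun_eq_zero (by positivity) hr hτ (by linarith)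
    (by linarith [(hlam η hη μ hμ).1]) (hlam η' hη' μ hμ).1.le (hL μ hμ hμM)
    (le_min (by linarith) (by have := mul_pos hα hβ; positivity)) (min_le_left _ _) ?_
    (hlam η hη μ hμ).2 (hlam η' hη' μ hμ).2
  calc _ ≤ 4 * α * β * (η' - η) / 2 / ((1 + r * τ) * (L + 2 * α + η') ^ 2) *
        ((1 + r * τ) * (L + 2 * α + η') ^ 2) := by
        rw [mul_assoc]; gcongr; exact min_le_right _ _
    _ = 4 * α * β * (η' - η) / 2 := div_mul_cancel₀ _ (by positivity)
    _ ≤ α * β * (exp μ + exp (-μ)) ^ 2 * (η' - η) / 2 := by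
        gcongr ?_ * _ / 2
        nlinarith [four_le_exp_add_exp_neg_sq μ, mul_pos hα hβ]

theorem IsCharRoot.tendsto_div_atTop (hlam : IsCharRoot α β γ τ r lam) (hα : 0 < α) (hβ : 0 < β)
    (hr : 0 ≤ r) (hβγ : 0 ≤ 2 * β + γ) (hη : 0 < η) :
    Tendsto (fun μ => lam μ η / μ) atTop atTop := by
  set K := 2 * β + γ + (2 * α + η)
  have hlower : ∀ μ, 0 < μ → √(α * β) * (exp μ / μ ^ 1) + -K / μ ≤ lam μ η / μ := by
    intro μ hμ
    have := sqrt_le_of_charFun_eq_zero hr hβγ (by linarith) (hlam η hη μ hμ.le).1.le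
      (hlam η hη μ hμ.le).2
    have := sqrt_mul_exp_le_sqrt (mul_pos hα hβ).le μ
    rw [pow_one, mul_div_assoc', ← add_div, div_le_div_iff_of_pos_right hμ]
    linarith
  refine tendsto_atTop_mono' _ (eventually_gt_atTop 0 |>.mono hlower) ?_
  exact ((tendsto_exp_div_pow_atTop 1).const_mul_atTop (by positivity)).atTop_add
    (tendsto_const_nhds.div_atTop tendsto_id)

theorem IsCharRoot.strictAntiOn_spreadingSpeed (hlam : IsCharRoot α β γ τ r lam) (hα : 0 < α)
    (hβ : 0 < β) (hr : 0 ≤ r) (hβγ : 0 ≤ 2 * β + γ) (hτ : 0 ≤ τ) :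
    StrictAntiOn (spreadingSpeed lam) (Ioi 0) := by
  intro η hη η' hη' hηη'
  rw [mem_Ioi] at hη hη'
  have hpos : ∀ η, 0 < η → ∀ μ, 0 < μ → 0 ≤ lam μ η := fun η hη μ hμ => (hlam η hη μ hμ.le).1.le
  obtain ⟨M, hM⟩ := eventually_atTop.1 <|
    (hlam.tendsto_div_atTop hα hβ hr hβγ hη).eventually_ge_atTop (spreadingSpeed lam η' + 1)
  obtain ⟨δ, hδ, hgap⟩ := hlam.exists_gap hα hβ hr hτ hη hηη' (M := max M 1) (by positivity)
  suffices spreadingSpeed lam η' + min (δ / max M 1) 1 ≤ spreadingSpeed lam η by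
    have : 0 < min (δ / max M 1) 1 := lt_min (by positivity) one_pos
    linarith
  refine le_spreadingSpeed fun μ hμ => ?_
  rcases le_or_gt μ (max M 1) with hμM | hμM
  · calc spreadingSpeed lam η' + min (δ / max M 1) 1
        ≤ lam μ η' / μ + δ / μ := by
          gcongr
          · exact spreadingSpeed_le (hpos η' hη') hμ
          · exact (min_le_left _ _).trans (by gcongr)
      _ ≤ lam μ η / μ := by rw [← add_div]; gcongr; exact hgap μ hμ.le hμM
  · linarith [hM μ (le_of_max_le_left hμM.le), min_le_right (δ / max M 1) 1]

theorem IsCharRoot.tendsto_spreadingSpeed_atTop (hlam : IsCharRoot α β γ τ r lam) (hα : 0 < α)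
    (hβ : 0 < β) (hr : 0 ≤ r) (hτ : 0 ≤ τ) :
    Tendsto (spreadingSpeed lam) atTop (𝓝 0) := by
  set C := 4 * α * β + r - (2 * β + γ)
  have hupper : ∀ η, 1 < η → spreadingSpeed lam η ≤ 2 * C / log η := by
    intro η hη
    have hlog : 0 < log η := log_pos hη
    set μ := log η / 2
    have hμ : 0 < μ := by positivity
    obtain ⟨hpos, hzero⟩ := hlam η (by linarith) μ hμ.le
    have hexp : exp μ ^ 2 = η := by
      rw [show exp μ ^ 2 = exp (log η / 2 + log η / 2) by rw [exp_add, sq], add_halves,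
        exp_log (by linarith)]
    have hA : α * β * (exp μ + exp (-μ)) ^ 2 / (2 * α + η) ≤ 4 * α * β := by
      rw [div_le_iff₀ (by linarith)]
      nlinarith [exp_add_exp_neg_sq_le hμ.le, mul_pos hα hβ, mul_pos (mul_pos hα hβ) hα]
    have := le_div_add_of_charFun_eq_zero (by positivity) hr hτ (by linarith) hpos.le hzero
    calc spreadingSpeed lam η ≤ lam μ η / μ :=
          spreadingSpeed_le (fun ν hν => (hlam η (by linarith) ν hν.le).1.le) hμ
      _ ≤ C / μ := by gcongr; linarith
      _ = 2 * C / log η := by simp only [μ]; field_simp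
  have hnonneg : ∀ η, 0 < η → 0 ≤ spreadingSpeed lam η :=
    fun η hη => le_spreadingSpeed fun μ hμ => div_nonneg (hlam η hη μ hμ.le).1.le hμ.le
  have hbound : Tendsto (fun η => 2 * C / log η) atTop (𝓝 0) :=
    tendsto_const_nhds.div_atTop tendsto_log_atTop
  refine tendsto_of_tendsto_of_tendsto_of_le_of_le' tendsto_const_nhds hbound ?_ ?_
  · filter_upwards [eventually_gt_atTop 0] using hnonneg
  · filter_upwards [eventually_gt_atTop 1] using hupper

end spreadingSpeed

theorem speed_decreasing_in_bad_mortality_supercritical_general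
    (α β γ τ r : ℝ)
    (hα : 0 < α) (hβ : 0 < β) (hγ : 0 < γ) (hτ : 0 ≤ τ)
    (hr2 : 2 * β + γ ≤ r)
    (lam : ℝ → ℝ → ℝ)
    (hlam : ∀ η : ℝ, 0 < η → ∀ μ : ℝ, 0 ≤ μ → 0 < lam μ η ∧
      -(lam μ η + 2 * β + γ)
        + α * β * (Real.exp μ + Real.exp (-μ)) ^ 2 / (lam μ η + 2 * α + η)
        + r * Real.exp (-(lam μ η) * τ) = 0)
    (cstar : ℝ → ℝ)
    (hcstar : ∀ η : ℝ, 0 < η →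
      cstar η = sInf {c : ℝ | ∃ μ : ℝ, 0 < μ ∧ c = lam μ η / μ}) :
    (∀ η : ℝ, 0 < η → γ + 2 * β * η / (2 * α + η) < r) ∧
    StrictAntiOn cstar (Set.Ioi 0) ∧
    Filter.Tendsto cstar Filter.atTop (nhds 0) := by
  have hβγ : 0 ≤ 2 * β + γ := by positivity
  have hr : 0 ≤ r := hβγ.trans hr2
  have hroot : IsCharRoot α β γ τ r lam := hlam
  have hspeed : EqOn (spreadingSpeed lam) cstar (Ioi 0) := fun η hη => (hcstar η hη).symm
  refine ⟨fun η hη => ?_, (hroot.strictAntiOn_spreadingSpeed hα hβ hr hβγ hτ).congr hspeed,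
    (hroot.tendsto_spreadingSpeed_atTop hα hβ hr hτ).congr' ?_⟩
  · have : 2 * β * η / (2 * α + η) < 2 * β := by
      rw [div_lt_iff₀ (by positivity)]; nlinarith
    linarith
  · filter_upwards [eventually_gt_atTop 0] with η hη using hspeed hη

/-- Let `α, β, γ > 0`, `τ ≥ 0` and `r ≥ 2β + γ` (with `r > γ`).  For
`η > 0` and `μ ≥ 0` let `lam μ η` be the unique positive root of
`F(λ, μ, η) = −(λ + 2β + γ) + αβ(e^μ + e^{−μ})²/(λ + 2α + η) + r e^{−λτ} = 0`, and let
`c*(η) = inf_{μ>0} lam μ η / μ`.  Then `r > Γ(η) = γ + 2βη/(2α+η)` for every `η > 0`,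
`c*` is decreasing on `(0, ∞)`, and `c*(η) → 0` as `η → ∞`. -/
theorem speed_decreasing_in_bad_mortality_supercritical
    (α β γ τ r : ℝ)
    (hα : 0 < α) (hβ : 0 < β) (hγ : 0 < γ) (hτ : 0 ≤ τ)
    (hr : γ < r) (hr2 : 2 * β + γ ≤ r)
    (lam : ℝ → ℝ → ℝ)
    (hlam : ∀ η : ℝ, 0 < η → ∀ μ : ℝ, 0 ≤ μ → 0 < lam μ η ∧
      -(lam μ η + 2 * β + γ)
        + α * β * (Real.exp μ + Real.exp (-μ)) ^ 2 / (lam μ η + 2 * α + η)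
        + r * Real.exp (-(lam μ η) * τ) = 0)
    (cstar : ℝ → ℝ)
    (hcstar : ∀ η : ℝ, 0 < η →
      cstar η = sInf {c : ℝ | ∃ μ : ℝ, 0 < μ ∧ c = lam μ η / μ}) :
    (∀ η : ℝ, 0 < η → γ + 2 * β * η / (2 * α + η) < r) ∧
    StrictAntiOn cstar (Set.Ioi 0) ∧
    Filter.Tendsto cstar Filter.atTop (nhds 0) :=
  speed_decreasing_in_bad_mortality_supercritical_general α β γ τ r hα hβ hγ hτ hr2 lam hlam cstar
    hcstar
end
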